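/- For integers m ≥ 0, n ≥ 1 and any parameter μ ∈ ℝ, the generalised Laguerre polynomial admits the following determinant representations (all determinants over indices j,k = 0,…,n−1): T_{m,n}^{(μ)}(z) = det[L_{m+n}^{(μ+j+k+1)}(z)] = det[L_{m+n−j−k}^{(μ+2n−1)}(z)] = det[L_{m+2−n+j+k}^{(μ+2n−1)}(z)] = (−1)^{⌊n/2⌋} det[L_{m+j+1}^{(μ+n+k)}(z)] = (−1)^{⌊n/2⌋} det[L_{m+1+j−k}^{(μ+2n−1)}(z)], where L_n^{(α)} = 0 whenever n < 0. -/

import Mathlib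

noncomputable section

open Finset

/-- Generalized binomial coefficient `C(x, k)` for real `x`. -/
def genBinom (x : ℝ) (k : ℕ) : ℝ :=
  (∏ i ∈ Finset.range k, (x - i)) / (Nat.factorial k)

/-- Associated Laguerre polynomial `L_n^{(α)}(z)`, with the convention `L_n^{(α)} = 0` for `n < 0`. -/
def lagL (n : ℤ) (α : ℝ) : ℝ → ℝ := fun z =>
  if n < 0 then 0
  else ∑ k ∈ Finset.range (n.toNat + 1),
    (-1 : ℝ) ^ k * genBinom ((n : ℝ) + α) (n.toNat - k) * z ^ k / (Nat.factorial k)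

/-- Generalised Laguerre polynomial
`T_{m,n}^{(μ)}(z) = det[(d/dz)^{j+k} L_{m+n}^{(μ+1)}(z)]_{j,k=0}^{n-1}`
(with `T_{m,0}^{(μ)} = 1`, the empty determinant). -/
def genLag (m : ℤ) (n : ℕ) (μ : ℝ) : ℝ → ℝ := fun z =>
  Matrix.det (Matrix.of fun j k : Fin n =>
    iteratedDeriv ((j : ℕ) + (k : ℕ)) (lagL (m + n) (μ + 1)) z)

/-- Wronskian `Wr(f_1, …, f_r)(z) = det[(d/dz)^{j-1} f_k(z)]`. -/
def wronskian {r : ℕ} (f : Fin r → ℝ → ℝ) : ℝ → ℝ := fun z =>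
  Matrix.det (Matrix.of fun j k : Fin r => iteratedDeriv (j : ℕ) (f k) z)

/-- The constant `c_{m,n} = (-1)^{n(2m+1+n)/2} ∏_{j=1}^n (j-1)!/(m+j)!`. -/
def cmn (m n : ℕ) : ℝ :=
  (-1 : ℝ) ^ (n * (2 * m + 1 + n) / 2) *
    ∏ j ∈ Finset.range n, (Nat.factorial j : ℝ) / (Nat.factorial (m + j + 1))

/-- `τ_{m,n}^{(μ)}(z) = det[(z d/dz)^{j+k} L_{m+n}^{(n+μ)}(z)]_{j,k=0}^{n-1}`. -/
def tauP (m : ℤ) (n : ℕ) (μ : ℝ) : ℝ → ℝ := fun z =>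
  Matrix.det (Matrix.of fun j k : Fin n =>
    ((fun (g : ℝ → ℝ) => fun t => t * deriv g t)^[(j : ℕ) + (k : ℕ)]
      (lagL (m + n) ((n : ℝ) + μ))) z)

/-- Hirota bilinear operator `D_z(f • g) = f' g - f g'`. -/
def hirota (f g : ℝ → ℝ) (z : ℝ) : ℝ := deriv f z * g z - f z * deriv g z

/-- Probabilists' Hermite polynomial `He_n` as a real function. -/
def He (n : ℕ) : ℝ → ℝ := fun z => Polynomial.aeval z (Polynomial.hermite n)

/-- The fifth Painlevé equation (with `δ = -1/2`) for `w` with parameters `(a, b, c)`,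
holding at the point `z`. -/
def PV (a b c : ℝ) (w : ℝ → ℝ) (z : ℝ) : Prop :=
  iteratedDeriv 2 w z =
    (1 / (2 * w z) + 1 / (w z - 1)) * (deriv w z) ^ 2
      - (1 / z) * deriv w z
      + (w z - 1) ^ 2 * (a * (w z) ^ 2 + b) / (z ^ 2 * w z)
      + c * w z / z
      - w z * (w z + 1) / (2 * (w z - 1))

/-- The Jimbo–Miwa–Okamoto `σ`-equation `S_V` with parameters `(ν₁, ν₂, ν₃)`,
holding at the point `z`. -/
def SV (ν₁ ν₂ ν₃ : ℝ) (σ : ℝ → ℝ) (z : ℝ) : Prop :=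
  (z * iteratedDeriv 2 σ z) ^ 2 =
    (2 * (deriv σ z) ^ 2 + (ν₁ + ν₂ + ν₃ - z) * deriv σ z + σ z) ^ 2
      - 4 * deriv σ z * (deriv σ z + ν₁) * (deriv σ z + ν₂) * (deriv σ z + ν₃)

/-!
Differentiating `L_N^{(α)}` lowers the degree and raises the parameter by one, so up to the signs
`(-1)^{j+k}` the Hankel matrix of derivatives defining `T_{m,n}^{(μ)}` is
`[L_{m+n-j-k}^{(μ+j+k+1)}]`. Iterating the contiguous relation
`L_N^{(α+1)} = L_N^{(α)} + L_{N-1}^{(α+1)}` gives `L_N^{(α+t)} = ∑ₛ C(t,s) L_{N-s}^{(α+s)}`, so each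
of the other matrices arises from this one by multiplication with unitriangular binomial matrices,
possibly after reversing the order of the indices; reversing the rows alone costs the sign
`(-1)^{⌊n/2⌋}` of the reversal permutation.
-/

open Matrix

theorem Fin.cast_val_rev {R : Type*} [AddCommGroupWithOne R] {n : ℕ} (j : Fin n) :
    ((j.rev : ℕ) : R) = n - 1 - (j : ℕ) := by
  rw [Fin.val_rev, Nat.cast_sub (by omega)]
  push_cast
  abel

theorem Fin.finRotate_mul_revPerm (n : ℕ) :
    finRotate (n + 1) * Fin.revPerm = Equiv.Perm.decomposeFin.symm (0, Fin.revPerm) := by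
  ext i
  refine Fin.cases ?_ (fun k => ?_) i
  · simp
  · have := k.2
    simp only [Equiv.Perm.coe_mul, Function.comp_apply, Fin.revPerm_apply, finRotate_apply,
      Equiv.Perm.decomposeFin_symm_apply_succ, Equiv.swap_self, Equiv.refl_apply, Fin.val_succ,
      Fin.val_rev]
    rw [Fin.val_add_one_of_lt (by simp [Fin.lt_def, Fin.val_rev]; omega), Fin.val_rev]
    simp

theorem Fin.sign_revPerm (n : ℕ) :
    Equiv.Perm.sign (Fin.revPerm : Equiv.Perm (Fin n)) = (-1) ^ (n / 2) := by
  induction n with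
  | zero => rfl
  | succ n ih =>
    have h := congrArg Equiv.Perm.sign (Fin.finRotate_mul_revPerm n)
    rw [Equiv.Perm.decomposeFin.symm_sign, map_mul, sign_finRotate, if_pos rfl, one_mul, ih,
      Nat.succ_sub_one] at h
    have hpar : (-1 : ℤˣ) ^ ((n + 1) / 2) = (-1) ^ n * (-1) ^ (n / 2) := by
      rw [← pow_add, Int.units_pow_eq_pow_mod_two, Int.units_pow_eq_pow_mod_two (n := n + _)]
      congr 1
      rcases Nat.even_or_odd' n with ⟨b, rfl | rfl⟩ <;> omega
    rw [hpar, ← h, ← mul_assoc, Int.units_mul_self, one_mul]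

namespace Matrix

variable {R : Type*} [CommRing R]

theorem det_neg_one_pow_add_mul {ι : Type*} [Fintype ι] [DecidableEq ι] (s : ι → ℕ)
    (A : Matrix ι ι R) : det (of fun i j => (-1) ^ (s i + s j) * A i j) = det A := by
  calc det (of fun i j => (-1) ^ (s i + s j) * A i j)
      = det (of fun i j => (-1) ^ s i * (of fun i j => (-1) ^ s j * A i j) i j) := by
        simp only [of_apply, pow_add, mul_assoc]
    _ = (∏ i, ((-1) ^ s i * (-1) ^ s i)) * det A := by
        rw [det_mul_column, det_mul_row, ← mul_assoc, ← prod_mul_distrib]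
    _ = det A := by simp [← mul_pow]

variable {n : ℕ}

theorem det_binomial_rows (f : ℕ → Fin n → R) :
    det (of fun j k : Fin n => ∑ s ∈ range (j + 1), ((j : ℕ).choose s : R) * f s k)
      = det (of fun j k : Fin n => f j k) := by
  have hP : (of fun j s : Fin n => ((j : ℕ).choose s : R)).det = 1 := by
    rw [det_of_isLowerTriangular _ fun i j (hij : i < j) => by
      simp [Nat.choose_eq_zero_of_lt hij]]
    simp
  have hmul : (of fun j k : Fin n => ∑ s ∈ range (j + 1), ((j : ℕ).choose s : R) * f s k)
      = of (fun j s : Fin n => ((j : ℕ).choose s : R)) * of fun j k : Fin n => f j k := by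
    ext j k
    simp only [mul_apply, of_apply]
    rw [Fin.sum_univ_eq_sum_range (fun s => ((j : ℕ).choose s : R) * f s k)]
    refine sum_subset (range_subset_range.2 j.2) fun s _ hs => ?_
    rw [Nat.choose_eq_zero_of_lt (by simpa using hs), Nat.cast_zero, zero_mul]
  rw [hmul, det_mul, hP, one_mul]

theorem det_binomial_cols (f : Fin n → ℕ → R) :
    det (of fun j k : Fin n => ∑ s ∈ range (k + 1), ((k : ℕ).choose s : R) * f j s)
      = det (of fun j k : Fin n => f j k) := by
  rw [← det_transpose, ← det_transpose (of fun j k => f j k)]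
  exact det_binomial_rows fun s j => f j s

theorem det_binomial_rows_rev (f : ℕ → Fin n → R) :
    det (of fun j k : Fin n =>
        ∑ s ∈ range (j.rev + 1), ((j.rev : ℕ).choose s : R) * f (j + s) k)
      = det (of fun j k : Fin n => f j k) := by
  rw [← det_submatrix_equiv_self Fin.revPerm, ← det_submatrix_equiv_self Fin.revPerm (of _)]
  convert det_binomial_rows fun s k => f (n - 1 - s) k.rev using 2 <;> ext j k
  · simp only [submatrix_apply, of_apply, Fin.revPerm_apply, Fin.rev_rev]
    rw [← sum_range_reflect, Fin.val_rev]
    refine sum_congr rfl fun s hs => ?_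
    have := mem_range.1 hs
    have := j.2
    rw [show (j : ℕ) + 1 - 1 - s = j - s by omega, Nat.choose_symm (by omega),
      show n - (j + 1) + (j - s) = n - 1 - s by omega]
  · simp only [submatrix_apply, of_apply, Fin.revPerm_apply, Fin.val_rev]
    congr 1
    omega

theorem det_binomial_cols_rev (f : Fin n → ℕ → R) :
    det (of fun j k : Fin n =>
        ∑ s ∈ range (k.rev + 1), ((k.rev : ℕ).choose s : R) * f j (k + s))
      = det (of fun j k : Fin n => f j k) := by
  rw [← det_transpose, ← det_transpose (of fun j k => f j k)]
  exact det_binomial_rows_rev fun s j => f j s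

end Matrix

theorem hasDerivAt_sum_mul_pow_div_factorial (a : ℕ → ℝ) (M : ℕ) (z : ℝ) :
    HasDerivAt (fun z => ∑ k ∈ range (M + 1), a k * z ^ k / k.factorial)
      (∑ k ∈ range M, a (k + 1) * z ^ k / k.factorial) z := by
  refine (HasDerivAt.fun_sum (u := range (M + 1)) fun k _ =>
    ((hasDerivAt_pow k z).const_mul (a k)).div_const (k.factorial : ℝ)).congr_deriv ?_
  rw [sum_range_succ']
  simp only [Nat.cast_zero, zero_mul, mul_zero, zero_div, add_zero]
  refine sum_congr rfl fun k _ => ?_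
  rw [Nat.factorial_succ, Nat.cast_mul, Nat.add_sub_cancel]
  field_simp

theorem genBinom_eq_choose (x : ℝ) (k : ℕ) : genBinom x k = Ring.choose x k := by
  rw [genBinom, Ring.choose_eq_smul, smul_eq_mul, ← Polynomial.aeval_eq_smeval,
    ← descPochhammer_eval_eq_prod_range, Polynomial.aeval_def, ← Polynomial.eval_map,
    descPochhammer_map, div_eq_inv_mul]

theorem lagL_natCast (M : ℕ) (α : ℝ) : lagL M α = fun z =>
    ∑ k ∈ range (M + 1), (-1) ^ k * Ring.choose ((M : ℝ) + α) (M - k) * z ^ k / k.factorial := by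
  funext z
  simp [lagL, genBinom_eq_choose]

theorem lagL_of_neg {N : ℤ} (hN : N < 0) (α : ℝ) : lagL N α = 0 := by
  funext z
  simp [lagL, hN]

theorem lagL_add_one (N : ℤ) (α z : ℝ) :
    lagL N (α + 1) z = lagL N α z + lagL (N - 1) (α + 1) z := by
  rcases lt_or_ge N 0 with hN | hN
  · simp [lagL_of_neg hN, lagL_of_neg (show N - 1 < 0 by omega)]
  obtain ⟨M, rfl⟩ := Int.eq_ofNat_of_zero_le hN
  cases M with
  | zero => simp [lagL, genBinom]
  | succ M =>
    rw [show ((M + 1 : ℕ) : ℤ) - 1 = M by push_cast; ring]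
    simp only [lagL_natCast]
    rw [sum_range_succ _ (M + 1), sum_range_succ _ (M + 1), add_right_comm, ← sum_add_distrib]
    congr 1
    · refine sum_congr rfl fun k hk => ?_
      have hk : M + 1 - k = (M - k) + 1 := by have := mem_range.1 hk; omega
      rw [hk, show ((M + 1 : ℕ) : ℝ) + (α + 1) = ((M + 1 : ℕ) : ℝ) + α + 1 by ring,
        Ring.choose_succ_succ, show ((M + 1 : ℕ) : ℝ) + α = M + (α + 1) by push_cast; ring]
      ring
    · simp

theorem lagL_add_natCast (N : ℤ) (α z : ℝ) (t : ℕ) :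
    lagL N (α + t) z = ∑ s ∈ range (t + 1), (t.choose s : ℝ) * lagL (N - s) (α + s) z := by
  induction t generalizing α with
  | zero => simp
  | succ t ih =>
    have contiguous : ∀ s : ℕ, lagL (N - s) (α + 1 + s) z
        = lagL (N - s) (α + s) z + lagL (N - (s + 1 : ℕ)) (α + (s + 1 : ℕ)) z := by
      intro s
      rw [add_right_comm, lagL_add_one]
      push_cast
      ring_nf
    rw [Nat.cast_succ, ← add_assoc, add_right_comm, ih (α + 1)]
    simp only [contiguous, mul_add, sum_add_distrib]
    exact (sum_choose_succ_mul (fun s _ => lagL (N - s) (α + s) z) t).symm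

theorem deriv_lagL (N : ℤ) (α : ℝ) : deriv (lagL N α) = -lagL (N - 1) (α + 1) := by
  ext z
  rcases lt_or_ge N 0 with hN | hN
  · simp [lagL_of_neg hN, lagL_of_neg (show N - 1 < 0 by omega)]
  obtain ⟨M, rfl⟩ := Int.eq_ofNat_of_zero_le hN
  have hd := hasDerivAt_sum_mul_pow_div_factorial
    (fun k => (-1) ^ k * Ring.choose ((M : ℝ) + α) (M - k)) M z
  rw [← lagL_natCast] at hd
  rw [hd.deriv]
  cases M with
  | zero => simp [lagL]
  | succ M =>
    rw [show ((M + 1 : ℕ) : ℤ) - 1 = M by push_cast; ring, Pi.neg_apply, lagL_natCast,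
      ← sum_neg_distrib]
    refine sum_congr rfl fun k _ => ?_
    rw [show ((M + 1 : ℕ) : ℝ) + α = M + (α + 1) by push_cast; ring, Nat.add_sub_add_right]
    ring

theorem iteratedDeriv_lagL (t : ℕ) (N : ℤ) (α : ℝ) :
    iteratedDeriv t (lagL N α) = fun z => (-1) ^ t * lagL (N - t) (α + t) z := by
  induction t generalizing N α with
  | zero => ext z; simp
  | succ t ih =>
    ext z
    rw [iteratedDeriv_succ', deriv_lagL, iteratedDeriv_neg, ih]
    push_cast
    ring_nf

section LaguerreDeterminants

variable {n : ℕ}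

theorem det_iteratedDeriv_lagL (N : ℤ) (μ z : ℝ) :
    det (of fun j k : Fin n => iteratedDeriv ((j : ℕ) + (k : ℕ)) (lagL N (μ + 1)) z)
      = det (of fun j k : Fin n =>
          lagL (N - (j : ℕ) - (k : ℕ)) (μ + (j : ℕ) + (k : ℕ) + 1) z) := by
  conv_rhs => rw [← det_neg_one_pow_add_mul fun j : Fin n => (j : ℕ)]
  congr 1
  ext j k
  rw [of_apply, of_apply, of_apply, iteratedDeriv_lagL]
  push_cast
  ring_nf

theorem det_lagL_hankel_param (N : ℤ) (μ z : ℝ) :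
    det (of fun j k : Fin n => lagL N (μ + (j : ℕ) + (k : ℕ) + 1) z)
      = det (of fun j k : Fin n =>
          lagL (N - (j : ℕ) - (k : ℕ)) (μ + (j : ℕ) + (k : ℕ) + 1) z) := by
  calc _ = det (of fun j k : Fin n => ∑ s ∈ range ((j : ℕ) + 1),
          ((j : ℕ).choose s : ℝ) * lagL (N - s) (μ + s + (k : ℕ) + 1) z) := by
        congr 1
        ext j k
        rw [of_apply, of_apply, show μ + (j : ℕ) + (k : ℕ) + 1 = μ + (k : ℕ) + 1 + (j : ℕ) by ring,
          lagL_add_natCast]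
        refine sum_congr rfl fun s _ => ?_
        ring_nf
    _ = det (of fun j k : Fin n => lagL (N - (j : ℕ)) (μ + (j : ℕ) + (k : ℕ) + 1) z) :=
        det_binomial_rows fun s k => lagL (N - s) (μ + s + (k : ℕ) + 1) z
    _ = det (of fun j k : Fin n => ∑ s ∈ range ((k : ℕ) + 1),
          ((k : ℕ).choose s : ℝ) * lagL (N - (j : ℕ) - s) (μ + (j : ℕ) + s + 1) z) := by
        congr 1
        ext j k
        rw [of_apply, of_apply, show μ + (j : ℕ) + (k : ℕ) + 1 = μ + (j : ℕ) + 1 + (k : ℕ) by ring,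
          lagL_add_natCast]
        refine sum_congr rfl fun s _ => ?_
        ring_nf
    _ = _ := det_binomial_cols fun j s => lagL (N - (j : ℕ) - s) (μ + (j : ℕ) + s + 1) z


theorem det_lagL_hankel_degree (N : ℤ) (μ z : ℝ) :
    det (of fun j k : Fin n => lagL (N - (j : ℕ) - (k : ℕ)) (μ + (j : ℕ) + (k : ℕ) + 1) z)
      = det (of fun j k : Fin n => lagL (N - (j : ℕ) - (k : ℕ)) (μ + 2 * n - 1) z) := by
  calc _ = det (of fun j k : Fin n => ∑ s ∈ range (j.rev + 1), ((j.rev : ℕ).choose s : ℝ)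
          * lagL (N - ((j : ℕ) + s : ℕ) - (k : ℕ)) (μ + ((j : ℕ) + s : ℕ) + (k : ℕ) + 1) z) :=
        (det_binomial_rows_rev fun l k =>
          lagL (N - l - (k : ℕ)) (μ + l + (k : ℕ) + 1) z).symm
    _ = det (of fun j k : Fin n => lagL (N - (j : ℕ) - (k : ℕ)) (μ + n + (k : ℕ)) z) := by
        congr 1
        ext j k
        rw [of_apply, of_apply, show μ + n + (k : ℕ) = μ + (j : ℕ) + (k : ℕ) + 1 + (j.rev : ℕ) by
          rw [Fin.cast_val_rev]; ring, lagL_add_natCast]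
        refine sum_congr rfl fun s _ => ?_
        push_cast
        ring_nf
    _ = det (of fun j k : Fin n => ∑ s ∈ range (k.rev + 1), ((k.rev : ℕ).choose s : ℝ)
          * lagL (N - (j : ℕ) - ((k : ℕ) + s : ℕ)) (μ + n + ((k : ℕ) + s : ℕ)) z) :=
        (det_binomial_cols_rev fun j l => lagL (N - (j : ℕ) - l) (μ + n + l) z).symm
    _ = _ := by
        congr 1
        ext j k
        rw [of_apply, of_apply, show μ + 2 * n - 1 = μ + n + (k : ℕ) + (k.rev : ℕ) by
          rw [Fin.cast_val_rev]; ring, lagL_add_natCast]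
        refine sum_congr rfl fun s _ => ?_
        push_cast
        ring_nf

theorem det_lagL_hankel_degree_rev (M : ℤ) (β z : ℝ) :
    det (of fun j k : Fin n => lagL (M + 2 - n + (j : ℕ) + (k : ℕ)) β z)
      = det (of fun j k : Fin n => lagL (M + n - (j : ℕ) - (k : ℕ)) β z) := by
  rw [← det_submatrix_equiv_self Fin.revPerm (of fun j k : Fin n => lagL (M + n - _ - _) β z)]
  congr 1
  ext j k
  simp only [submatrix_apply, of_apply, Fin.revPerm_apply, Fin.val_rev]
  refine congrArg (lagL · β z) ?_
  have := j.2
  have := k.2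
  omega

theorem det_lagL_hankel_degree_eq_toeplitz (M : ℤ) (β z : ℝ) :
    det (of fun j k : Fin n => lagL (M + n - (j : ℕ) - (k : ℕ)) β z)
      = (-1) ^ (n / 2) * det (of fun j k : Fin n => lagL (M + 1 + (j : ℕ) - (k : ℕ)) β z) := by
  have hrev : (of fun j k : Fin n => lagL (M + 1 + (j : ℕ) - (k : ℕ)) β z)
      = (of fun j k : Fin n => lagL (M + n - (j : ℕ) - (k : ℕ)) β z).submatrix Fin.revPerm id := by
    ext j k
    simp only [submatrix_apply, of_apply, Fin.revPerm_apply, Fin.val_rev, id]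
    refine congrArg (lagL · β z) ?_
    have := j.2
    omega
  rw [hrev, det_permute, Fin.sign_revPerm, ← mul_assoc]
  push_cast
  rw [← mul_pow, neg_one_mul, neg_neg, one_pow, one_mul]

theorem det_lagL_toeplitz (M : ℤ) (μ z : ℝ) :
    det (of fun j k : Fin n => lagL (M + (j : ℕ) + 1) (μ + n + (k : ℕ)) z)
      = det (of fun j k : Fin n => lagL (M + 1 + (j : ℕ) - (k : ℕ)) (μ + 2 * n - 1) z) := by
  calc _ = det (of fun j k : Fin n => ∑ s ∈ range ((k : ℕ) + 1),
          ((k : ℕ).choose s : ℝ) * lagL (M + 1 + (j : ℕ) - s) (μ + n + s) z) := by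
        congr 1
        ext j k
        rw [of_apply, of_apply, add_right_comm M, lagL_add_natCast]
    _ = det (of fun j k : Fin n => lagL (M + 1 + (j : ℕ) - (k : ℕ)) (μ + n + (k : ℕ)) z) :=
        det_binomial_cols fun j s => lagL (M + 1 + (j : ℕ) - s) (μ + n + s) z
    _ = det (of fun j k : Fin n => ∑ s ∈ range (k.rev + 1), ((k.rev : ℕ).choose s : ℝ)
          * lagL (M + 1 + (j : ℕ) - ((k : ℕ) + s : ℕ)) (μ + n + ((k : ℕ) + s : ℕ)) z) :=
        (det_binomial_cols_rev fun j l => lagL (M + 1 + (j : ℕ) - l) (μ + n + l) z).symm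
    _ = _ := by
        congr 1
        ext j k
        rw [of_apply, of_apply, show μ + 2 * n - 1 = μ + n + (k : ℕ) + (k.rev : ℕ) by
          rw [Fin.cast_val_rev]; ring, lagL_add_natCast]
        refine sum_congr rfl fun s _ => ?_
        push_cast
        ring_nf

end LaguerreDeterminants

theorem genLag_det_representations_general (m n : ℕ) (μ : ℝ) (z : ℝ) :
    genLag (m : ℤ) n μ z
        = Matrix.det (Matrix.of fun j k : Fin n =>
            lagL ((m : ℤ) + n) (μ + (j : ℕ) + (k : ℕ) + 1) z)
      ∧ genLag (m : ℤ) n μ z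
        = Matrix.det (Matrix.of fun j k : Fin n =>
            lagL ((m : ℤ) + n - (j : ℕ) - (k : ℕ)) (μ + 2 * n - 1) z)
      ∧ genLag (m : ℤ) n μ z
        = Matrix.det (Matrix.of fun j k : Fin n =>
            lagL ((m : ℤ) + 2 - n + (j : ℕ) + (k : ℕ)) (μ + 2 * n - 1) z)
      ∧ genLag (m : ℤ) n μ z
        = (-1 : ℝ) ^ (n / 2) * Matrix.det (Matrix.of fun j k : Fin n =>
            lagL ((m : ℤ) + (j : ℕ) + 1) (μ + n + (k : ℕ)) z)
      ∧ genLag (m : ℤ) n μ z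
        = (-1 : ℝ) ^ (n / 2) * Matrix.det (Matrix.of fun j k : Fin n =>
            lagL ((m : ℤ) + 1 + (j : ℕ) - (k : ℕ)) (μ + 2 * n - 1) z) := by
  have hD : genLag m n μ z = _ := det_iteratedDeriv_lagL ((m : ℤ) + n) μ z
  have hE := hD.trans (det_lagL_hankel_degree _ μ z)
  refine ⟨hD.trans (det_lagL_hankel_param _ μ z).symm, hE,
    hE.trans (det_lagL_hankel_degree_rev _ _ z).symm, ?_,
    hE.trans (det_lagL_hankel_degree_eq_toeplitz _ _ z)⟩
  rw [hE, det_lagL_hankel_degree_eq_toeplitz, det_lagL_toeplitz]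

/-- determinant representations of `T_{m,n}^{(μ)}`. -/
theorem genLag_det_representations (m n : ℕ) (hn : 1 ≤ n) (μ : ℝ) (z : ℝ) :
    genLag (m : ℤ) n μ z
        = Matrix.det (Matrix.of fun j k : Fin n =>
            lagL ((m : ℤ) + n) (μ + (j : ℕ) + (k : ℕ) + 1) z)
      ∧ genLag (m : ℤ) n μ z
        = Matrix.det (Matrix.of fun j k : Fin n =>
            lagL ((m : ℤ) + n - (j : ℕ) - (k : ℕ)) (μ + 2 * n - 1) z)
      ∧ genLag (m : ℤ) n μ z
        = Matrix.det (Matrix.of fun j k : Fin n =>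
            lagL ((m : ℤ) + 2 - n + (j : ℕ) + (k : ℕ)) (μ + 2 * n - 1) z)
      ∧ genLag (m : ℤ) n μ z
        = (-1 : ℝ) ^ (n / 2) * Matrix.det (Matrix.of fun j k : Fin n =>
            lagL ((m : ℤ) + (j : ℕ) + 1) (μ + n + (k : ℕ)) z)
      ∧ genLag (m : ℤ) n μ z
        = (-1 : ℝ) ^ (n / 2) * Matrix.det (Matrix.of fun j k : Fin n =>
            lagL ((m : ℤ) + 1 + (j : ℕ) - (k : ℕ)) (μ + 2 * n - 1) z) :=
  genLag_det_representations_general m n μ z
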